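/- arXiv:2406.02156 — 5 statements merged into one kernel-verified Lean document; each statement's English description precedes it below -/
import Mathlib

section
/- Let μ₁, μ₂, μ₁′, μ₂′ be probability distributions on a measurable space Ω. If μ₁ and μ₂ are (ε, δ*)-indistinguishable, and the total variation distances satisfy d_TV(μ₁, μ₁′) ≤ δ′ and d_TV(μ₂, μ₂′) ≤ δ′, then μ₁′ and μ₂′ are (ε, (e^ε + 1)·δ′ + δ*)-indistinguishable. -/
open MeasureTheory

/-- closeness in total variation approximately preserves
    (ε,δ)-indistinguishability with δ inflated to (e^ε+1)δ' + δ*. -/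
theorem stmt2 {Ω : Type*} [MeasurableSpace Ω]
    (μ₁ μ₂ μ₁' μ₂' : Measure Ω)
    [IsProbabilityMeasure μ₁] [IsProbabilityMeasure μ₂]
    [IsProbabilityMeasure μ₁'] [IsProbabilityMeasure μ₂']
    (ε δstar δ' : ℝ) (hε : 0 ≤ ε) (hδstar : 0 ≤ δstar) (hδ' : 0 ≤ δ')
    (hind : ∀ s : Set Ω, MeasurableSet s →
      (μ₁ s).toReal ≤ Real.exp ε * (μ₂ s).toReal + δstar ∧
      (μ₂ s).toReal ≤ Real.exp ε * (μ₁ s).toReal + δstar)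
    (htv₁ : ∀ s : Set Ω, MeasurableSet s → |(μ₁ s).toReal - (μ₁' s).toReal| ≤ δ')
    (htv₂ : ∀ s : Set Ω, MeasurableSet s → |(μ₂ s).toReal - (μ₂' s).toReal| ≤ δ') :
    ∀ s : Set Ω, MeasurableSet s →
      (μ₁' s).toReal ≤ Real.exp ε * (μ₂' s).toReal + ((Real.exp ε + 1) * δ' + δstar) ∧
      (μ₂' s).toReal ≤ Real.exp ε * (μ₁' s).toReal + ((Real.exp ε + 1) * δ' + δstar) := by
  intro s hs
  obtain ⟨h1, h2⟩ := hind s hs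
  have t1 := abs_le.mp (htv₁ s hs)
  have t2 := abs_le.mp (htv₂ s hs)
  have he : (1:ℝ) ≤ Real.exp ε := Real.one_le_exp hε
  constructor <;> nlinarith [t1.1, t1.2, t2.1, t2.2]
end

section
/- Let ε > 0, β ∈ (0,1), k ∈ ℕ with |E| ≤ k ≤ N where E ⊆ [N] is the support of the weight vector w ∈ ℝ_{≥0}^N. Let π be the distribution on size-k subsets of [N] with π(S) ∝ ∏_{e∈S} exp(ε·w_e). Then π({S : ε·‖(w|S) − w‖₁ ≥ k·log N + log(1/β)}) ≤ β. Equivalently, with probability at least 1−β under π, ‖(w|S) − w‖₁ ≤ (k·log N + log(1/β))/ε. -/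
open Finset

/-- under π(S) ∝ ∏_{e∈S} exp(ε·w_e) on size-k subsets of [N], the probability
    that ε·‖(w|S) − w‖₁ ≥ k·log N + log(1/β) is at most β. -/
theorem stmt4 (N k : ℕ) (hN : 1 ≤ N) (ε β : ℝ) (hε : 0 < ε) (hβ : β ∈ Set.Ioo (0:ℝ) 1)
    (w : Fin N → ℝ) (hw : ∀ i, 0 ≤ w i)
    (hEk : ((Finset.univ : Finset (Fin N)).filter fun e => w e ≠ 0).card ≤ k)
    (hkN : k ≤ N) :
    (∑ S ∈ ((Finset.univ : Finset (Fin N)).powersetCard k).filter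
        (fun S => (k : ℝ) * Real.log N + Real.log (1 / β) ≤
          ε * ∑ i, |(if i ∈ S then w i else 0) - w i|),
        ∏ e ∈ S, Real.exp (ε * w e)) /
      (∑ S ∈ (Finset.univ : Finset (Fin N)).powersetCard k,
        ∏ e ∈ S, Real.exp (ε * w e)) ≤ β := by
  obtain ⟨hβ0, hβ1⟩ := hβ
  set P := ((Finset.univ : Finset (Fin N)).powersetCard k) with hP
  -- product = exp of sum
  have hW : ∀ S : Finset (Fin N), ∏ e ∈ S, Real.exp (ε * w e)
      = Real.exp (ε * ∑ e ∈ S, w e) := by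
    intro S
    rw [Finset.mul_sum, Real.exp_sum]
  -- S₀ containing the support
  obtain ⟨S₀, hES₀, hS₀sub, hS₀card⟩ :=
    Finset.exists_subsuperset_card_eq (Finset.subset_univ _) hEk (by simpa using hkN)
  have hS₀mem : S₀ ∈ P := by
    simp [hP, Finset.mem_powersetCard, hS₀card]
  have hS₀sum : ∑ e ∈ S₀, w e = ∑ i, w i := by
    apply Finset.sum_subset hS₀sub
    intro x _ hx
    by_contra h
    exact hx (hES₀ (by simp [h]))
  -- the ℓ¹ distance
  have habs : ∀ S : Finset (Fin N),
      ∑ i, |(if i ∈ S then w i else 0) - w i| = ∑ i, w i - ∑ i ∈ S, w i := by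
    intro S
    have h1 : ∀ i, |(if i ∈ S then w i else 0) - w i|
        = w i - (if i ∈ S then w i else 0) := by
      intro i
      by_cases h : i ∈ S
      · simp [h]
      · simp [h, abs_of_nonpos, hw i, abs_of_nonneg]
    rw [Finset.sum_congr rfl fun i _ => h1 i, Finset.sum_sub_distrib]
    congr 1
    simp [Finset.sum_ite_mem]
  set Q := P.filter (fun S => (k : ℝ) * Real.log N + Real.log (1 / β) ≤
      ε * ∑ i, |(if i ∈ S then w i else 0) - w i|) with hQ
  -- denominator positivity
  have hDpos : 0 < ∑ S ∈ P, ∏ e ∈ S, Real.exp (ε * w e) :=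
    Finset.sum_pos (fun S _ => Finset.prod_pos fun e _ => Real.exp_pos _) ⟨S₀, hS₀mem⟩
  rw [div_le_iff₀ hDpos]
  -- bound each filtered term
  have hNpos : (0:ℝ) < (N:ℝ) ^ k := by positivity
  have hterm : ∀ S ∈ Q, ∏ e ∈ S, Real.exp (ε * w e) ≤ Real.exp (ε * ∑ i, w i) * β / (N:ℝ)^k := by
    intro S hS
    rw [hQ, Finset.mem_filter] at hS
    obtain ⟨hSP, hcond⟩ := hS
    rw [habs S, mul_sub] at hcond
    rw [hW]
    have hle : ε * ∑ e ∈ S, w e ≤ ε * ∑ i, w i - ((k:ℝ) * Real.log N + Real.log (1/β)) := by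
      linarith
    calc Real.exp (ε * ∑ e ∈ S, w e)
        ≤ Real.exp (ε * ∑ i, w i - ((k:ℝ) * Real.log N + Real.log (1/β))) :=
          Real.exp_le_exp.mpr hle
      _ = Real.exp (ε * ∑ i, w i) * β / (N:ℝ)^k := by
          rw [Real.exp_sub, Real.exp_add]
          rw [Real.log_div one_ne_zero (ne_of_gt hβ0), Real.log_one]
          rw [Real.exp_sub, Real.exp_log hβ0]
          have : Real.exp ((k:ℝ) * Real.log N) = (N:ℝ)^k := by
            rw [← Real.rpow_natCast (N:ℝ) k, Real.rpow_def_of_pos (by exact_mod_cast hN)]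
            ring_nf
          rw [this]
          field_simp
          rw [Real.exp_zero]
  -- numerator bound
  have hcard : (Q.card : ℝ) ≤ (N:ℝ)^k := by
    have h1 : Q.card ≤ P.card := hQ ▸ Finset.card_filter_le _ _
    have h2 : P.card = N.choose k := by simp [hP]
    have h3 : N.choose k ≤ N ^ k := Nat.choose_le_pow N k
    calc (Q.card : ℝ) ≤ (N ^ k : ℕ) := by exact_mod_cast le_trans h1 (h2 ▸ h3)
      _ = (N:ℝ)^k := by push_cast; ring
  have hnum : (∑ S ∈ Q, ∏ e ∈ S, Real.exp (ε * w e))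
      ≤ β * Real.exp (ε * ∑ i, w i) := by
    calc (∑ S ∈ Q, ∏ e ∈ S, Real.exp (ε * w e))
        ≤ Q.card • (Real.exp (ε * ∑ i, w i) * β / (N:ℝ)^k) :=
          Finset.sum_le_card_nsmul _ _ _ hterm
      _ = (Q.card : ℝ) * (Real.exp (ε * ∑ i, w i) * β / (N:ℝ)^k) := by
          rw [nsmul_eq_mul]
      _ ≤ (N:ℝ)^k * (Real.exp (ε * ∑ i, w i) * β / (N:ℝ)^k) := by
          apply mul_le_mul_of_nonneg_right hcard
          positivity
      _ = β * Real.exp (ε * ∑ i, w i) := by field_simp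
  -- denominator ≥ term of S₀
  have hD : Real.exp (ε * ∑ i, w i) ≤ ∑ S ∈ P, ∏ e ∈ S, Real.exp (ε * w e) := by
    rw [← hS₀sum, ← hW]
    exact Finset.single_le_sum (f := fun S => ∏ e ∈ S, Real.exp (ε * w e))
      (fun S _ => le_of_lt (Finset.prod_pos fun e _ => Real.exp_pos _)) hS₀mem
  calc (∑ S ∈ Q, ∏ e ∈ S, Real.exp (ε * w e))
      ≤ β * Real.exp (ε * ∑ i, w i) := hnum
    _ ≤ β * ∑ S ∈ P, ∏ e ∈ S, Real.exp (ε * w e) :=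
        mul_le_mul_of_nonneg_left hD (le_of_lt hβ0)
end

section
/- Let Z₁, …, Z_k be i.i.d. Laplace random variables with scale b > 0 and let q₁, …, q_k ∈ [0,1]. Then for any α > 0: if α ≤ k·b, then Pr[Σᵢ qᵢZᵢ > α] ≤ exp(−α²/(6kb²)); and if α > k·b, then Pr[Σᵢ qᵢZᵢ > α] ≤ exp(−α/(6kb)). -/
/-!
Chernoff's method. The moment generating function of `Lap(b)` is `(1 - s²b²)⁻¹` for `|s| b < 1`,
and `(1 - x)⁻¹ ≤ exp (3x/2)` for `0 ≤ x ≤ 1/3`; by independence, for `0 ≤ t ≤ 1/(3b)`,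
`Pr[∑ qᵢZᵢ > α] ≤ exp (-tα + (3/2) k t²b²)`. The choice `t = α/(3kb²)` (admissible when `α ≤ kb`)
gives `exp (-α²/(6kb²))`, and `t = 1/(3b)` gives `exp (-α/(3b) + k/6) ≤ exp (-α/(6kb))` when `α > kb`.
-/

open MeasureTheory

/-- The Laplace distribution with scale `b`, given by density exp(−|x|/b)/(2b). -/
noncomputable def laplaceMeasure (b : ℝ) : Measure ℝ :=
  volume.withDensity fun x => ENNReal.ofReal (Real.exp (-|x| / b) / (2 * b))

open ProbabilityTheory Real Set
open scoped ENNReal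

lemma measure_lt_le_exp_mul_lintegral_exp {Ω : Type*} [MeasurableSpace Ω] {μ : Measure Ω}
    {S : Ω → ℝ} (hS : AEMeasurable S μ) {t : ℝ} (ht : 0 ≤ t) (α : ℝ) :
    μ {ω | α < S ω} ≤
      ENNReal.ofReal (exp (-(t * α))) * ∫⁻ ω, ENNReal.ofReal (exp (t * S ω)) ∂μ := by
  calc μ {ω | α < S ω}
      ≤ μ {ω | ENNReal.ofReal (exp (t * α)) ≤ ENNReal.ofReal (exp (t * S ω))} :=
        measure_mono fun ω hω => ENNReal.ofReal_le_ofReal <| exp_le_exp.2 <|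
          mul_le_mul_of_nonneg_left (le_of_lt hω) ht
    _ ≤ (∫⁻ ω, ENNReal.ofReal (exp (t * S ω)) ∂μ) / ENNReal.ofReal (exp (t * α)) :=
        meas_ge_le_lintegral_div (by fun_prop) (by simpa using exp_pos _) ENNReal.ofReal_ne_top
    _ = _ := by
        rw [ENNReal.div_eq_inv_mul, ← ENNReal.ofReal_inv_of_pos (exp_pos _), ← exp_neg]

lemma lintegral_exp_sum_mul_pi {ι : Type*} [Fintype ι] (μ : ι → Measure ℝ)
    [∀ i, IsProbabilityMeasure (μ i)] (c : ι → ℝ) :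
    ∫⁻ ω, ENNReal.ofReal (exp (∑ i, c i * ω i)) ∂Measure.pi μ =
      ∏ i, ∫⁻ x, ENNReal.ofReal (exp (c i * x)) ∂μ i := by
  have hindep := iIndepFun_pi (μ := μ) (X := fun i x => ENNReal.ofReal (exp (c i * x)))
    fun i => by fun_prop
  simp_rw [exp_sum, ENNReal.ofReal_prod_of_nonneg fun i _ => (exp_pos _).le]
  rw [lintegral_prod_eq_prod_lintegral_of_indepFun _ _ hindep fun i => by fun_prop]
  exact Finset.prod_congr rfl fun i _ => (measurePreserving_eval μ i).lintegral_comp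
    (f := fun x => ENNReal.ofReal (exp (c i * x))) (by fun_prop)

lemma inv_one_sub_le_exp {x : ℝ} (hx₀ : 0 ≤ x) (hx₁ : x ≤ 1 / 3) :
    (1 - x)⁻¹ ≤ exp (3 / 2 * x) := by
  have : 1 - x ≠ 0 := by linarith
  calc (1 - x)⁻¹ = x / (1 - x) + 1 := by field_simp; ring
    _ ≤ exp (x / (1 - x)) := add_one_le_exp _
    _ ≤ exp (3 / 2 * x) := exp_le_exp.2 <| by rw [div_le_iff₀ (by linarith)]; nlinarith

section Laplace

variable {b s : ℝ}

lemma integrable_and_integral_laplace_density_mul_exp (hb : 0 < b) (hs : |s| < b⁻¹) :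
    Integrable (fun x => exp (-|x| / b) / (2 * b) * exp (s * x)) ∧
      ∫ x, exp (-|x| / b) / (2 * b) * exp (s * x) = (1 - s ^ 2 * b ^ 2)⁻¹ := by
  obtain ⟨hs₁, hs₂⟩ := abs_lt.mp hs
  have hneg : s - b⁻¹ < 0 := by linarith
  have hpos : 0 < s + b⁻¹ := by linarith
  have eq_Ioi : EqOn (fun x => exp (-|x| / b) / (2 * b) * exp (s * x))
      (fun x => exp ((s - b⁻¹) * x) / (2 * b)) (Ioi 0) := fun x hx => by
    simp only [abs_of_pos (mem_Ioi.mp hx), div_mul_eq_mul_div, ← exp_add]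
    ring_nf
  have eq_Iic : EqOn (fun x => exp (-|x| / b) / (2 * b) * exp (s * x))
      (fun x => exp ((s + b⁻¹) * x) / (2 * b)) (Iic 0) := fun x hx => by
    simp only [abs_of_nonpos (mem_Iic.mp hx), div_mul_eq_mul_div, ← exp_add]
    ring_nf
  have int_Ioi := IntegrableOn.congr_fun ((integrableOn_exp_mul_Ioi hneg 0).div_const (2 * b))
    eq_Ioi.symm measurableSet_Ioi
  have int_Iic := IntegrableOn.congr_fun ((integrableOn_exp_mul_Iic hpos 0).div_const (2 * b))
    eq_Iic.symm measurableSet_Iic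
  refine ⟨?_, ?_⟩
  · rw [← integrableOn_univ, ← Iic_union_Ioi (a := 0)]
    exact int_Iic.union int_Ioi
  rw [← intervalIntegral.integral_Iic_add_Ioi int_Iic int_Ioi,
    setIntegral_congr_fun measurableSet_Iic eq_Iic, setIntegral_congr_fun measurableSet_Ioi eq_Ioi,
    integral_div, integral_div, integral_exp_mul_Iic hpos, integral_exp_mul_Ioi hneg]
  have h₁ : s * b - 1 ≠ 0 := by nlinarith [mul_inv_cancel₀ hb.ne']
  have h₂ : s * b + 1 ≠ 0 := by nlinarith [mul_inv_cancel₀ hb.ne']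
  rw [show 1 - s ^ 2 * b ^ 2 = -((s * b - 1) * (s * b + 1)) by ring, mul_zero, mul_zero, exp_zero]
  field_simp
  ring

lemma lintegral_exp_mul_laplaceMeasure (hb : 0 < b) (hs : |s| < b⁻¹) :
    ∫⁻ x, ENNReal.ofReal (exp (s * x)) ∂laplaceMeasure b =
      ENNReal.ofReal (1 - s ^ 2 * b ^ 2)⁻¹ := by
  obtain ⟨hint, hval⟩ := integrable_and_integral_laplace_density_mul_exp hb hs
  rw [laplaceMeasure, lintegral_withDensity_eq_lintegral_mul _ (by fun_prop) (by fun_prop),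
    ← hval, ofReal_integral_eq_lintegral_ofReal hint (.of_forall fun x => by positivity)]
  simp only [Pi.mul_apply, ← ENNReal.ofReal_mul (by positivity : 0 ≤ exp (-|_| / b) / (2 * b))]

lemma isProbabilityMeasure_laplaceMeasure (hb : 0 < b) :
    IsProbabilityMeasure (laplaceMeasure b) := by
  constructor
  simpa using lintegral_exp_mul_laplaceMeasure (s := 0) hb (by simpa using hb)

lemma lintegral_exp_mul_laplaceMeasure_le (hb : 0 < b) (hs : |s| * b ≤ 1 / 3) :
    ∫⁻ x, ENNReal.ofReal (exp (s * x)) ∂laplaceMeasure b ≤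
      ENNReal.ofReal (exp (3 / 2 * (s * b) ^ 2)) := by
  have hsb : (s * b) ^ 2 ≤ 1 / 3 := by
    rw [← sq_abs, abs_mul, abs_of_pos hb]
    nlinarith [mul_nonneg (abs_nonneg s) hb.le]
  have hs' : |s| < b⁻¹ := by rw [← one_div, lt_div_iff₀ hb]; linarith
  rw [lintegral_exp_mul_laplaceMeasure hb hs', ← mul_pow]
  exact ENNReal.ofReal_le_ofReal (inv_one_sub_le_exp (sq_nonneg _) hsb)

end Laplace

lemma measure_pi_laplaceMeasure_sum_mul_gt_le {ι : Type*} [Fintype ι] {b : ℝ} (hb : 0 < b)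
    {q : ι → ℝ} (hq : ∀ i, q i ∈ Icc (0 : ℝ) 1) {t : ℝ} (ht : 0 ≤ t) (htb : t * b ≤ 1 / 3)
    (α : ℝ) :
    Measure.pi (fun _ : ι => laplaceMeasure b) {ω | α < ∑ i, q i * ω i} ≤
      ENNReal.ofReal (exp (-(t * α) + 3 / 2 * Fintype.card ι * (t * b) ^ 2)) := by
  have := isProbabilityMeasure_laplaceMeasure hb
  have hmgf (i : ι) : ∫⁻ x, ENNReal.ofReal (exp (t * q i * x)) ∂laplaceMeasure b ≤
      ENNReal.ofReal (exp (3 / 2 * (t * b) ^ 2)) := by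
    obtain ⟨hq₀, hq₁⟩ := hq i
    have htq₀ : 0 ≤ t * q i := mul_nonneg ht hq₀
    have htq₁ : t * q i * b ≤ t * b :=
      mul_le_mul_of_nonneg_right (mul_le_of_le_one_right ht hq₁) hb.le
    refine (lintegral_exp_mul_laplaceMeasure_le hb ?_).trans <|
      ENNReal.ofReal_le_ofReal <| exp_le_exp.2 ?_
    · rw [abs_of_nonneg htq₀]
      exact htq₁.trans htb
    · gcongr
  calc Measure.pi (fun _ : ι => laplaceMeasure b) {ω | α < ∑ i, q i * ω i}
      ≤ ENNReal.ofReal (exp (-(t * α))) * ∫⁻ ω, ENNReal.ofReal (exp (t * ∑ i, q i * ω i))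
          ∂Measure.pi fun _ => laplaceMeasure b :=
        measure_lt_le_exp_mul_lintegral_exp (by fun_prop : Measurable _).aemeasurable ht α
    _ = ENNReal.ofReal (exp (-(t * α))) *
          ∏ i, ∫⁻ x, ENNReal.ofReal (exp (t * q i * x)) ∂laplaceMeasure b := by
        simp_rw [Finset.mul_sum, ← mul_assoc]
        rw [lintegral_exp_sum_mul_pi]
    _ ≤ ENNReal.ofReal (exp (-(t * α))) * ∏ _i : ι, ENNReal.ofReal (exp (3 / 2 * (t * b) ^ 2)) := by
        gcongr with i
        exact hmgf i
    _ = _ := by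
        rw [Finset.prod_const, Finset.card_univ, ← ENNReal.ofReal_pow (exp_pos _).le,
          ← exp_nat_mul, ← ENNReal.ofReal_mul (exp_pos _).le, ← exp_add]
        ring_nf

/-- tail bound for [0,1]-weighted sums of i.i.d. Laplace(b) variables. -/
theorem stmt6 (k : ℕ) (hk : 1 ≤ k) (b : ℝ) (hb : 0 < b) (q : Fin k → ℝ)
    (hq : ∀ i, q i ∈ Set.Icc (0:ℝ) 1) (α : ℝ) (hα : 0 < α) :
    (α ≤ k * b →
      (Measure.pi fun _ : Fin k => laplaceMeasure b) {ω | α < ∑ i, q i * ω i}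
        ≤ ENNReal.ofReal (Real.exp (-(α ^ 2) / (6 * k * b ^ 2)))) ∧
    (k * b < α →
      (Measure.pi fun _ : Fin k => laplaceMeasure b) {ω | α < ∑ i, q i * ω i}
        ≤ ENNReal.ofReal (Real.exp (-α / (6 * k * b)))) := by
  have hk₁ : (1 : ℝ) ≤ k := by exact_mod_cast hk
  have hk₀ : (0 : ℝ) < k := by linarith
  have tail (t : ℝ) (ht : 0 ≤ t) (htb : t * b ≤ 1 / 3) :=
    measure_pi_laplaceMeasure_sum_mul_gt_le hb hq ht htb α
  simp only [Fintype.card_fin] at tail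
  refine ⟨fun hαk => ?_, fun hkα => ?_⟩
  · refine (tail (α / (3 * k * b ^ 2)) (by positivity) ?_).trans_eq ?_
    · rw [div_mul_eq_mul_div, div_le_div_iff₀ (by positivity) (by norm_num)]
      nlinarith [mul_le_mul_of_nonneg_right hαk hb.le]
    · congr 2
      field_simp
      ring
  · refine (tail (1 / (3 * b)) (by positivity) (le_of_eq (by field_simp))).trans <|
      ENNReal.ofReal_le_ofReal <| exp_le_exp.2 ?_
    have hgap : -α / (6 * k * b) - (-(1 / (3 * b) * α) + 3 / 2 * k * (1 / (3 * b) * b) ^ 2) =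
        ((2 * k - 1) * α - k ^ 2 * b) / (6 * k * b) := by
      field_simp
      ring
    have : 0 ≤ ((2 * k - 1) * α - k ^ 2 * b) / (6 * k * b) :=
      div_nonneg (by nlinarith [mul_lt_mul_of_pos_left hkα hk₀]) (by positivity)
    linarith
end

section
/- Fix ε > 0 and δ ∈ (0,1). Let M : ℝ_{≥0}^N → ℝ^N be an (ε, δ)-differentially private mechanism (with respect to neighboring vectors differing in one coordinate by at most 1). Suppose that for some input G, some coordinate i and some threshold 0 < αᵢ < 1/2, with probability at least 1 − β the output Ĝ = M(G) satisfies |G[i] − Ĝ[i]| ≤ αᵢ, and the same holds for the neighbor G^{(i)} with G^{(i)}[i] = G[i] + 1. Then β ≥ e^{−ε}(1 − β − δ); in particular β ≥ (1−δ)/(e^ε+1), so the per-coordinate failure probability cannot be smaller than Θ((1−δ)/(e^ε+1)). -/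
open MeasureTheory

/-- Two weight vectors are neighboring if they differ in exactly one coordinate by at most 1. -/
def NeighboringWeights {N : ℕ} (w w' : Fin N → ℝ) : Prop :=
  ∃ i, |w i - w' i| ≤ 1 ∧ ∀ j, j ≠ i → w j = w' j

/-- a per-coordinate accuracy guarantee with failure probability β for an
    (ε,δ)-DP mechanism forces β ≥ e^{−ε}(1 − β − δ). -/
theorem stmt8 (N : ℕ) (ε δ β : ℝ) (hε : 0 < ε) (hδ : δ ∈ Set.Ioo (0:ℝ) 1)
    (M : (Fin N → ℝ) → Measure (Fin N → ℝ))
    (hprob : ∀ w, IsProbabilityMeasure (M w))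
    (hDP : ∀ w w', NeighboringWeights w w' → ∀ s : Set (Fin N → ℝ), MeasurableSet s →
      ((M w) s).toReal ≤ Real.exp ε * ((M w') s).toReal + δ)
    (G : Fin N → ℝ) (hG : ∀ i, 0 ≤ G i) (i : Fin N)
    (α : ℝ) (hα : 0 < α) (hα2 : α < 1 / 2)
    (hacc : 1 - β ≤ ((M G) {g | |g i - G i| ≤ α}).toReal)
    (hacc' : 1 - β ≤
      ((M (Function.update G i (G i + 1))) {g | |g i - (G i + 1)| ≤ α}).toReal) :
    Real.exp (-ε) * (1 - β - δ) ≤ β := by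
  set G' := Function.update G i (G i + 1) with hG'
  set S : Set (Fin N → ℝ) := {g | g i ≤ G i + α} with hS
  have hSm : MeasurableSet S := by
    have : S = (fun g : Fin N → ℝ => g i) ⁻¹' (Set.Iic (G i + α)) := rfl
    rw [this]
    exact (measurable_pi_apply i) measurableSet_Iic
  have hnbr : NeighboringWeights G G' := by
    refine ⟨i, ?_, fun j hj => ?_⟩
    · simp [hG', Function.update_self]
    · simp [hG', Function.update_of_ne hj]
  haveI := hprob G
  haveI := hprob G'
  -- M G S ≥ 1 - β
  have h1 : 1 - β ≤ ((M G) S).toReal := by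
    refine le_trans hacc ?_
    have hsub : {g : Fin N → ℝ | |g i - G i| ≤ α} ⊆ S := by
      intro g hg
      simp only [Set.mem_setOf_eq] at hg
      have := (abs_le.mp hg).2
      simp only [hS, Set.mem_setOf_eq]
      linarith
    exact ENNReal.toReal_mono (measure_ne_top _ _) (measure_mono hsub)
  -- M G' S ≤ β
  have h2 : ((M G') S).toReal ≤ β := by
    have hsub : {g : Fin N → ℝ | |g i - (G i + 1)| ≤ α} ⊆ Sᶜ := by
      intro g hg
      simp only [Set.mem_setOf_eq] at hg
      have := (abs_le.mp hg).1
      simp only [hS, Set.mem_compl_iff, Set.mem_setOf_eq, not_le]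
      linarith
    have hc : 1 - β ≤ ((M G') Sᶜ).toReal :=
      le_trans hacc' (ENNReal.toReal_mono (measure_ne_top _ _) (measure_mono hsub))
    have hcompl : ((M G') Sᶜ).toReal = 1 - ((M G') S).toReal := by
      rw [prob_compl_eq_one_sub hSm,
        ENNReal.toReal_sub_of_le prob_le_one ENNReal.one_ne_top, ENNReal.toReal_one]
    linarith [hcompl ▸ hc]
  have hdp := hDP G G' hnbr S hSm
  have key : 1 - β ≤ Real.exp ε * β + δ := by
    have hmul : Real.exp ε * ((M G') S).toReal ≤ Real.exp ε * β :=
      mul_le_mul_of_nonneg_left h2 (Real.exp_pos ε).le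
    linarith
  have hinv : Real.exp (-ε) * (1 - β - δ) ≤ Real.exp (-ε) * (Real.exp ε * β) := by
    apply mul_le_mul_of_nonneg_left (by linarith) (Real.exp_pos (-ε)).le
  calc Real.exp (-ε) * (1 - β - δ) ≤ Real.exp (-ε) * (Real.exp ε * β) := hinv
    _ = β := by rw [← mul_assoc, ← Real.exp_add]; simp
end

section
/- Consider the high-pass filter mechanism: given w ∈ ℝ_{≥0}^E, set ŵ_e = w_e + Z_e with Z_e i.i.d. Lap(1/ε), then zero out every coordinate with ŵ_e ≤ t where t = 2log(2n/δ)/ε. Then with probability at least 1 − δ, ‖w − ŵ‖₁ ≤ 2|E|·t = 4|E|·log(2n/δ)/ε, and consequently max_{q∈[0,1]^N} |q^⊤w − q^⊤ŵ| ≤ 4|E|·log(2n/δ)/ε. -/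
/-!
If every noise value on the support E satisfies |Z_e| ≤ t, each coordinate of the filtered
output is off by at most 2t: a kept coordinate is off by |Z_e|, and a zeroed one has
w_e ≤ t - Z_e ≤ 2t. Hence ‖w - ŵ‖₁ ≤ 2|E| t, and a query with weights in [0,1] errs by at most
the ℓ¹ distance. The Laplace tail P(|Z_e| > t) = exp(-εt) equals (δ/2n)² for
t = 2 log(2n/δ)/ε, so a union bound over |E| ≤ C(n,2) ≤ n² coordinates bounds the failure
probability by δ²/4 ≤ δ.
-/

open MeasureTheory Finset

/-- The high-pass filter mechanism: add Laplace noise ω_e on each edge e ∈ E (the support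
    of w), then zero out every coordinate whose perturbed weight is at most the threshold t;
    coordinates outside the support remain 0. -/
noncomputable def highPass (N : ℕ) (w : Fin N → ℝ) (t : ℝ) (ω : Fin N → ℝ) :
    Fin N → ℝ :=
  fun e => if w e ≠ 0 then (if w e + ω e ≤ t then 0 else w e + ω e) else 0

namespace laplaceMeasure

open Set

variable {b : ℝ}

lemma apply_Ioi (hb : 0 < b) {t : ℝ} (ht : 0 ≤ t) :
    laplaceMeasure b (Ioi t) = ENNReal.ofReal (Real.exp (-t / b) / 2) := by
  have hexp : ∀ x, Real.exp (-x / b) = Real.exp (-b⁻¹ * x) := fun x => by ring_nf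
  have hint : IntegrableOn (fun x => Real.exp (-x / b) / (2 * b)) (Ioi t) := by
    simp_rw [hexp]
    exact (integrableOn_exp_mul_Ioi (by simpa using hb) t).div_const _
  rw [laplaceMeasure, withDensity_apply _ measurableSet_Ioi,
    setLIntegral_congr_fun measurableSet_Ioi fun x (hx : t < x) => by
      rw [abs_of_pos (ht.trans_lt hx)],
    ← ofReal_integral_eq_lintegral_ofReal hint (.of_forall fun x => by positivity),
    integral_div]
  simp_rw [hexp]
  rw [integral_exp_mul_Ioi (by simpa using hb)]
  congr 1
  field_simp

lemma apply_Iio_neg (t : ℝ) : laplaceMeasure b (Iio (-t)) = laplaceMeasure b (Ioi t) := by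
  rw [laplaceMeasure, withDensity_apply _ measurableSet_Iio, withDensity_apply _ measurableSet_Ioi,
    ← (Measure.measurePreserving_neg volume).setLIntegral_comp_preimage measurableSet_Iio
      (by fun_prop)]
  simp [Set.neg_preimage]

lemma apply_abs_gt (hb : 0 < b) {t : ℝ} (ht : 0 ≤ t) :
    laplaceMeasure b {x | t < |x|} = ENNReal.ofReal (Real.exp (-t / b)) := by
  have hsplit : {x : ℝ | t < |x|} = Iio (-t) ∪ Ioi t := by
    ext x
    simp only [mem_ofPred_eq, mem_union, Set.mem_Iio, Set.mem_Ioi, lt_abs, lt_neg]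
    tauto
  have hdisj : Disjoint (Iio (-t)) (Ioi t) :=
    (Iic_disjoint_Ioi (by linarith)).mono_left Iio_subset_Iic_self
  rw [hsplit, measure_union hdisj measurableSet_Ioi, apply_Iio_neg, apply_Ioi hb ht,
    ← ENNReal.ofReal_add (by positivity) (by positivity), add_halves]

lemma isProbabilityMeasure (hb : 0 < b) : IsProbabilityMeasure (laplaceMeasure b) := by
  have hzero : laplaceMeasure b {0} = 0 :=
    withDensity_absolutelyContinuous _ _ Real.volume_singleton
  have hae : {x : ℝ | 0 < |x|} =ᵐ[laplaceMeasure b] univ :=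
    ae_eq_univ.mpr (by simpa [compl_ofPred] using hzero)
  constructor
  rw [← measure_congr hae, apply_abs_gt hb le_rfl]
  simp

lemma apply_abs_gt_le (hb : 0 < b) (t : ℝ) :
    laplaceMeasure b {x | t < |x|} ≤ ENNReal.ofReal (Real.exp (-t / b)) := by
  rcases le_or_gt 0 t with ht | ht
  · exact (apply_abs_gt hb ht).le
  · have := isProbabilityMeasure hb
    calc laplaceMeasure b {x | t < |x|} ≤ 1 := prob_le_one
      _ ≤ ENNReal.ofReal (Real.exp (-t / b)) :=
        ENNReal.one_le_ofReal.mpr (Real.one_le_exp (div_nonneg (neg_nonneg.mpr ht.le) hb.le))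

end laplaceMeasure

lemma measure_pi_exists_mem_le {ι α : Type*} [Fintype ι] [MeasurableSpace α] (μ : Measure α)
    [IsProbabilityMeasure μ] (s : Finset ι) {A : Set α} (hA : MeasurableSet A) :
    Measure.pi (fun _ : ι => μ) {ω | ∃ i ∈ s, ω i ∈ A} ≤ s.card * μ A := by
  have hunion : {ω : ι → α | ∃ i ∈ s, ω i ∈ A} = ⋃ i ∈ s, Function.eval i ⁻¹' A := by
    ext ω; simp
  calc Measure.pi (fun _ : ι => μ) {ω | ∃ i ∈ s, ω i ∈ A}
      ≤ ∑ i ∈ s, Measure.pi (fun _ : ι => μ) (Function.eval i ⁻¹' A) :=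
        hunion ▸ measure_biUnion_finset_le _ _
    _ = s.card * μ A := by
        rw [sum_congr rfl fun i _ =>
          (measurePreserving_eval (fun _ : ι => μ) i).measure_preimage hA.nullMeasurableSet,
          sum_const, nsmul_eq_mul]

lemma abs_sum_mul_le_sum_abs_of_mem_Icc {ι : Type*} (s : Finset ι) {q d : ι → ℝ}
    (hq : ∀ i ∈ s, q i ∈ Set.Icc (0 : ℝ) 1) : |∑ i ∈ s, q i * d i| ≤ ∑ i ∈ s, |d i| := by
  refine (abs_sum_le_sum_abs _ _).trans (sum_le_sum fun i hi => ?_)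
  rw [abs_mul, abs_of_nonneg (hq i hi).1]
  exact mul_le_of_le_one_left (abs_nonneg _) (hq i hi).2

section highPass

variable {N : ℕ} {w : Fin N → ℝ} {t : ℝ} {ω : Fin N → ℝ}

lemma abs_sub_highPass_le {e : Fin N} (hwe : 0 ≤ w e) (hωe : |ω e| ≤ t) :
    |w e - highPass N w t ω e| ≤ 2 * t := by
  have hωe' := abs_le.mp hωe
  unfold highPass
  split_ifs with hne hle
  · rw [sub_zero, abs_of_nonneg hwe]; linarith
  · rw [sub_add_cancel_left, abs_neg]; linarith [abs_nonneg (ω e)]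
  · rw [not_ne_iff.mp hne, sub_zero, abs_zero]; linarith [abs_nonneg (ω e)]

lemma sum_abs_sub_highPass_le (hw : ∀ e, 0 ≤ w e) (hω : ∀ e, w e ≠ 0 → |ω e| ≤ t) :
    ∑ e, |w e - highPass N w t ω e| ≤ (univ.filter fun e => w e ≠ 0).card * (2 * t) := by
  have hsupp : ∀ e ∈ univ, |w e - highPass N w t ω e| ≠ 0 → w e ≠ 0 := by
    intro e _ h hwe
    simp [highPass, hwe] at h
  rw [← sum_filter_of_ne hsupp, ← nsmul_eq_mul]
  exact sum_le_card_nsmul _ _ _ fun e he => abs_sub_highPass_le (hw e) (hω e (mem_filter.mp he).2)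

lemma highPass_errors_le (hw : ∀ e, 0 ≤ w e) (hω : ∀ e, w e ≠ 0 → |ω e| ≤ t) :
    ∑ e, |w e - highPass N w t ω e| ≤ (univ.filter fun e => w e ≠ 0).card * (2 * t) ∧
      ∀ q : Fin N → ℝ, (∀ i, q i ∈ Set.Icc (0:ℝ) 1) →
        |∑ e, q e * (w e - highPass N w t ω e)| ≤
          (univ.filter fun e => w e ≠ 0).card * (2 * t) :=
  have hsum := sum_abs_sub_highPass_le hw hω
  ⟨hsum, fun _ hq => (abs_sum_mul_le_sum_abs_of_mem_Icc _ fun i _ => hq i).trans hsum⟩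

end highPass

lemma choose_two_mul_exp_neg_two_log_le (n : ℕ) {δ : ℝ} (hδ : δ ∈ Set.Ioo (0 : ℝ) 1) :
    (n.choose 2 : ℝ) * Real.exp (-(2 * Real.log (2 * n / δ))) ≤ δ := by
  obtain ⟨hδ0, hδ1⟩ := hδ
  rcases Nat.eq_zero_or_pos n with rfl | hn
  · simpa using hδ0.le
  have hn' : (0 : ℝ) < n := by exact_mod_cast hn
  have hexp : Real.exp (-(2 * Real.log (2 * n / δ))) = (δ / (2 * n)) ^ 2 := by
    rw [show -(2 * Real.log (2 * n / δ)) = Real.log ((2 * n / δ)⁻¹ ^ 2) by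
      rw [Real.log_pow, Real.log_inv]; push_cast; ring, Real.exp_log (by positivity), inv_div]
  have hchoose : (n.choose 2 : ℝ) ≤ n ^ 2 := by exact_mod_cast Nat.choose_le_pow n 2
  calc (n.choose 2 : ℝ) * Real.exp (-(2 * Real.log (2 * n / δ)))
      ≤ n ^ 2 * (δ / (2 * n)) ^ 2 := by rw [hexp]; gcongr
    _ = δ ^ 2 / 4 := by field_simp; ring
    _ ≤ δ := by nlinarith

/-- with threshold t = 2log(2n/δ)/ε, with probability at least 1−δ the
    high-pass filter output ŵ satisfies ‖w − ŵ‖₁ ≤ 4|E|·log(2n/δ)/ε, and consequently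
    every linear query q ∈ [0,1]^N has error at most 4|E|·log(2n/δ)/ε. -/
theorem stmt19 (n N : ℕ) (hN : N = n.choose 2) (ε δ : ℝ) (hε : 0 < ε)
    (hδ : δ ∈ Set.Ioo (0:ℝ) 1) (w : Fin N → ℝ) (hw : ∀ e, 0 ≤ w e) :
    (Measure.pi fun _ : Fin N => laplaceMeasure (1 / ε))
      {ω | ¬ ((∑ e, |w e - highPass N w (2 * Real.log (2 * n / δ) / ε) ω e|
            ≤ 4 * ((Finset.univ.filter fun e => w e ≠ 0).card : ℝ) *
                Real.log (2 * n / δ) / ε) ∧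
          ∀ q : Fin N → ℝ, (∀ i, q i ∈ Set.Icc (0:ℝ) 1) →
            |∑ e, q e * (w e - highPass N w (2 * Real.log (2 * n / δ) / ε) ω e)|
              ≤ 4 * ((Finset.univ.filter fun e => w e ≠ 0).card : ℝ) *
                  Real.log (2 * n / δ) / ε)}
      ≤ ENNReal.ofReal δ := by
  set L := Real.log (2 * n / δ)
  set E := univ.filter fun e => w e ≠ 0
  have hb : 0 < 1 / ε := one_div_pos.mpr hε
  have := laplaceMeasure.isProbabilityMeasure hb
  have hthreshold : (E.card : ℝ) * (2 * (2 * L / ε)) = 4 * E.card * L / ε := by ring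
  have hcard : E.card ≤ n.choose 2 := hN ▸ (card_filter_le _ _).trans_eq (card_fin N)
  calc _ ≤ Measure.pi (fun _ : Fin N => laplaceMeasure (1 / ε))
        {ω | ∃ e ∈ E, ω e ∈ {x | 2 * L / ε < |x|}} := measure_mono fun ω hbad => by
        by_contra hgood
        simp only [Set.mem_ofPred_eq, not_exists, not_and, not_lt] at hgood
        rw [← hthreshold] at hbad
        exact hbad (highPass_errors_le hw fun e he => hgood e (by simpa [E] using he))
    _ ≤ E.card * laplaceMeasure (1 / ε) {x | 2 * L / ε < |x|} :=
        measure_pi_exists_mem_le _ E (measurableSet_lt measurable_const measurable_abs)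
    _ ≤ (n.choose 2 : ENNReal) * ENNReal.ofReal (Real.exp (-(2 * L))) := by
        gcongr
        refine (laplaceMeasure.apply_abs_gt_le hb _).trans_eq ?_
        rw [div_div_eq_mul_div, div_one, neg_mul, div_mul_cancel₀ _ hε.ne']
    _ ≤ ENNReal.ofReal δ := by
        rw [← ENNReal.ofReal_natCast, ← ENNReal.ofReal_mul (by positivity)]
        exact ENNReal.ofReal_le_ofReal (choose_two_mul_exp_neg_two_log_le n hδ)
end
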